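/- For every positive integer k and every real x > 0, x · (d/dx)^k [x^{k-1} F(x)] = -x·k! ∫_0^∞ e^{-t} t^{k-1}/(t+x)^{k+1} dt; in particular it is strictly negative. -/

import Mathlib

/-!
Dividing `x ^ c` by `t + x` with remainder gives
`x ^ c F(x) = P_c(x) + (-1) ^ c ∫₀^∞ e^{-t} t^c / (t + x) dt` with `P_c` a polynomial of degree
`< c`. Differentiating under the integral sign `n` times turns the integral into
`(-1) ^ n n! ∫₀^∞ e^{-t} t^c / (t + x)^{n+1} dt`, and for `n = c + 1` the polynomial is gone.
-/

noncomputable def F (x : ℝ) : ℝ := ∫ t in Set.Ioi (0:ℝ), Real.exp (-t) / (t + x)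

open MeasureTheory Real Set Polynomial
open scoped Nat

lemma integrableOn_exp_neg_mul_pow (c : ℕ) :
    IntegrableOn (fun t : ℝ => exp (-t) * t ^ c) (Ioi 0) := by
  simpa [rpow_natCast] using GammaIntegral_convergent (s := (c : ℝ) + 1) (by positivity)

lemma integral_exp_neg_mul_pow (c : ℕ) : ∫ t in Ioi (0:ℝ), exp (-t) * t ^ c = c ! := by
  rw [← Gamma_nat_eq_factorial, Gamma_eq_integral (by positivity)]
  simp [rpow_natCast]

lemma hasDerivAt_div_add_pow (a t : ℝ) (m : ℕ) {y : ℝ} (hy : 0 < t + y) :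
    HasDerivAt (fun y => a / (t + y) ^ m) (-m * (a / (t + y) ^ (m + 1))) y := by
  have hpow : HasDerivAt (fun y => (t + y) ^ m) (m * (t + y) ^ (m - 1) * 1) y :=
    ((hasDerivAt_id y).const_add t).pow m
  have h := (hpow.inv (by positivity)).const_mul a
  refine h.congr_deriv ?_
  rcases m with _ | m
  · simp
  · have : t + y ≠ 0 := hy.ne'
    simp only [Nat.add_sub_cancel]
    field_simp
    ring

noncomputable def genStieltjes (c m : ℕ) (x : ℝ) : ℝ :=
  ∫ t in Ioi (0:ℝ), exp (-t) * t ^ c / (t + x) ^ m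

lemma measurable_genStieltjes_integrand (c m : ℕ) (x : ℝ) :
    Measurable fun t : ℝ => exp (-t) * t ^ c / (t + x) ^ m := by
  fun_prop

lemma exp_neg_mul_pow_div_le {c m : ℕ} {a t y : ℝ} (ha : 0 < a) (ht : 0 < t) (hy : a ≤ y) :
    exp (-t) * t ^ c / (t + y) ^ m ≤ (a ^ m)⁻¹ * (exp (-t) * t ^ c) := by
  rw [div_eq_inv_mul]
  gcongr
  linarith

lemma integrableOn_genStieltjes_integrand (c m : ℕ) {x : ℝ} (hx : 0 < x) :
    IntegrableOn (fun t : ℝ => exp (-t) * t ^ c / (t + x) ^ m) (Ioi 0) := by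
  refine ((integrableOn_exp_neg_mul_pow c).const_mul (x ^ m)⁻¹).mono'
    (measurable_genStieltjes_integrand c m x).aestronglyMeasurable ?_
  filter_upwards [ae_restrict_mem measurableSet_Ioi] with t (ht : 0 < t)
  rw [Real.norm_of_nonneg (by positivity)]
  exact exp_neg_mul_pow_div_le hx ht le_rfl

lemma hasDerivAt_genStieltjes (c m : ℕ) {x : ℝ} (hx : 0 < x) :
    HasDerivAt (genStieltjes c m) (-m * genStieltjes c (m + 1) x) x := by
  have hball : ∀ y ∈ Metric.ball x (x / 2), x / 2 ≤ y := fun y hy => by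
    have := abs_lt.mp (Real.dist_eq y x ▸ Metric.mem_ball.mp hy)
    linarith
  have key := hasDerivAt_integral_of_dominated_loc_of_deriv_le
    (μ := volume.restrict (Ioi 0)) (x₀ := x)
    (F := fun y t => exp (-t) * t ^ c / (t + y) ^ m)
    (F' := fun y t => -m * (exp (-t) * t ^ c / (t + y) ^ (m + 1)))
    (bound := fun t => m * (((x / 2) ^ (m + 1))⁻¹ * (exp (-t) * t ^ c)))
    (Metric.ball_mem_nhds x (half_pos hx))
    (.of_forall fun y => (measurable_genStieltjes_integrand c m y).aestronglyMeasurable)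
    (integrableOn_genStieltjes_integrand c m hx)
    ((measurable_genStieltjes_integrand c (m + 1) x).const_mul _).aestronglyMeasurable
    ?_ (((integrableOn_exp_neg_mul_pow c).const_mul _).const_mul _) ?_
  · rw [integral_const_mul] at key
    exact key.2
  · filter_upwards [ae_restrict_mem measurableSet_Ioi] with t (ht : 0 < t) y hy
    have hy0 : 0 < y := by linarith [hball y hy]
    rw [norm_mul, norm_neg, Real.norm_natCast, Real.norm_of_nonneg (by positivity)]
    gcongr
    exact exp_neg_mul_pow_div_le (half_pos hx) ht (hball y hy)
  · filter_upwards [ae_restrict_mem measurableSet_Ioi] with t (ht : 0 < t) y hy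
    exact hasDerivAt_div_add_pow _ t m (by linarith [hball y hy])

lemma genStieltjes_pos (c m : ℕ) {x : ℝ} (hx : 0 < x) : 0 < genStieltjes c m x := by
  have hpos : ∀ t ∈ Ioi (0:ℝ), 0 < exp (-t) * t ^ c / (t + x) ^ m := fun t (ht : 0 < t) => by
    positivity
  rw [genStieltjes, setIntegral_pos_iff_support_of_nonneg_ae
    ((ae_restrict_mem measurableSet_Ioi).mono fun t ht => (hpos t ht).le)
    (integrableOn_genStieltjes_integrand c m hx)]
  rw [inter_eq_right.mpr fun t ht => Function.mem_support.mpr (hpos t ht).ne', Real.volume_Ioi]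
  exact ENNReal.zero_lt_top

noncomputable def powMulFPolyPart (c : ℕ) : ℝ[X] :=
  ∑ i ∈ Finset.range c, C ((-1 : ℝ) ^ i * i !) * X ^ (c - 1 - i)

lemma degree_powMulFPolyPart_lt (c : ℕ) : (powMulFPolyPart c).degree < c := by
  refine (degree_sum_le _ _).trans_lt
    ((Finset.sup_lt_iff (WithBot.bot_lt_coe c)).mpr fun i hi => ?_)
  have : c - 1 - i < c := by rw [Finset.mem_range] at hi; omega
  exact (degree_C_mul_X_pow_le _ _).trans_lt (WithBot.coe_lt_coe.mpr this)

lemma pow_div_add_eq_sum (c : ℕ) {t x : ℝ} (h : t + x ≠ 0) :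
    x ^ c / (t + x) = ∑ i ∈ Finset.range c, (-t) ^ i * x ^ (c - 1 - i) + (-t) ^ c / (t + x) := by
  have := geom_sum₂_mul (-t) x c
  field_simp
  linear_combination this

lemma pow_mul_F_eq (c : ℕ) {x : ℝ} (hx : 0 < x) :
    x ^ c * F x = (powMulFPolyPart c).eval x + (-1) ^ c * genStieltjes c 1 x := by
  have hsplit : ∀ t ∈ Ioi (0:ℝ), x ^ c * (exp (-t) / (t + x)) =
      ∑ i ∈ Finset.range c, ((-1) ^ i * x ^ (c - 1 - i)) * (exp (-t) * t ^ i)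
        + (-1) ^ c * (exp (-t) * t ^ c / (t + x) ^ 1) := fun t (ht : 0 < t) => by
    rw [mul_div_left_comm, pow_div_add_eq_sum c (by positivity), mul_add, Finset.mul_sum, neg_pow]
    congr 1
    · exact Finset.sum_congr rfl fun i _ => by rw [neg_pow]; ring
    · ring
  rw [F, ← integral_const_mul, setIntegral_congr_fun measurableSet_Ioi hsplit,
    integral_add (integrable_finsetSum _ fun i _ => (integrableOn_exp_neg_mul_pow i).const_mul _)
      ((integrableOn_genStieltjes_integrand c 1 hx).const_mul _),
    integral_finsetSum _ fun i _ => (integrableOn_exp_neg_mul_pow i).const_mul _,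
    integral_const_mul, powMulFPolyPart, eval_finsetSum]
  congr 1
  refine Finset.sum_congr rfl fun i _ => ?_
  rw [integral_const_mul, integral_exp_neg_mul_pow]
  simp only [eval_mul, eval_C, eval_pow, eval_X]
  ring

lemma eqOn_iteratedDeriv_of_hasDerivAt {𝕜 E : Type*} [NontriviallyNormedField 𝕜]
    [NormedAddCommGroup E] [NormedSpace 𝕜 E] {s : Set 𝕜} (hs : IsOpen s) {f : 𝕜 → E}
    {g : ℕ → 𝕜 → E} (hf : EqOn f (g 0) s)
    (hg : ∀ n, ∀ x ∈ s, HasDerivAt (g n) (g (n + 1) x) x) (n : ℕ) :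
    EqOn (iteratedDeriv n f) (g n) s := by
  induction n with
  | zero => simpa using hf
  | succ n ih =>
    intro x hx
    rw [iteratedDeriv_succ, ih.deriv hs hx, (hg n x hx).deriv]

lemma eqOn_iteratedDeriv_pow_mul_F (c n : ℕ) :
    EqOn (iteratedDeriv n fun y => y ^ c * F y)
      (fun y => (derivative^[n] (powMulFPolyPart c)).eval y
        + (-1) ^ (c + n) * n ! * genStieltjes c (n + 1) y) (Ioi 0) := by
  refine eqOn_iteratedDeriv_of_hasDerivAt
    (g := fun n y => (derivative^[n] (powMulFPolyPart c)).eval y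
      + (-1) ^ (c + n) * n ! * genStieltjes c (n + 1) y)
    isOpen_Ioi (fun x (hx : 0 < x) => ?_) (fun n x (hx : 0 < x) => ?_) n
  · simpa using pow_mul_F_eq c hx
  · have hpoly := (derivative^[n] (powMulFPolyPart c)).hasDerivAt x
    rw [← Function.iterate_succ_apply' derivative] at hpoly
    refine (hpoly.add ((hasDerivAt_genStieltjes c (n + 1) hx).const_mul
      ((-1 : ℝ) ^ (c + n) * n !))).congr_deriv ?_
    push_cast [Nat.factorial_succ, pow_succ]
    ring

theorem stmt_5 (k : ℕ) (hk : 1 ≤ k) (x : ℝ) (hx : 0 < x) :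
    x * iteratedDeriv k (fun y => y ^ (k - 1) * F y) x =
      -(x * (Nat.factorial k) *
        ∫ t in Set.Ioi (0:ℝ), Real.exp (-t) * t ^ (k - 1) / (t + x) ^ (k + 1)) ∧
    x * iteratedDeriv k (fun y => y ^ (k - 1) * F y) x < 0 := by
  obtain ⟨c, rfl⟩ : ∃ c, k = c + 1 := ⟨k - 1, by omega⟩
  have hpoly : derivative^[c + 1] (powMulFPolyPart c) = 0 :=
    iterate_derivative_eq_zero_of_degree_lt
      ((degree_powMulFPolyPart_lt c).trans (WithBot.coe_lt_coe.mpr c.lt_succ_self))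
  have hsign : (-1 : ℝ) ^ (c + (c + 1)) = -1 := Odd.neg_one_pow ⟨c, by ring⟩
  have hformula : x * iteratedDeriv (c + 1) (fun y => y ^ c * F y) x =
      -(x * (c + 1)! * genStieltjes c (c + 2) x) := by
    rw [eqOn_iteratedDeriv_pow_mul_F c (c + 1) hx, hpoly, hsign]
    simp only [eval_zero, zero_add]
    ring
  simp only [Nat.add_sub_cancel, hformula]
  have hJ := genStieltjes_pos c (c + 2) hx
  exact ⟨rfl, neg_neg_of_pos (by positivity)⟩
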